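/- arXiv:1405.2822 — 2 statements merged into one kernel-verified Lean document; each statement's English description precedes it below -/
import Mathlib

section
/- An information sharing graph G on the user set is connected if and only if the corresponding cluster-based graph (whose vertices are the clusters and whose edges connect communicating clusters) is connected. -/
/-- An information sharing graph `G` is connected if and only if the
corresponding cluster-based graph `CG` (vertices: clusters; edges: pairs of
communicating clusters) is connected. Here `cluster : V → ι` is a surjective
cluster assignment, users within a cluster are pairwise adjacent and have
identical neighborhoods outside their cluster, and two distinct clusters are
adjacent in `CG` iff some user of one is adjacent to some user of the other. -/
theorem cluster_graph_connectivity {V ι : Type*} [Nonempty V]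
    (G : SimpleGraph V) (cluster : V → ι) (hsurj : Function.Surjective cluster)
    (hintra : ∀ u v : V, cluster u = cluster v → u ≠ v → G.Adj u v)
    (hext : ∀ u v w : V, cluster u = cluster v → cluster w ≠ cluster u →
      (G.Adj u w ↔ G.Adj v w))
    (CG : SimpleGraph ι)
    (hCG : ∀ c c' : ι, CG.Adj c c' ↔ (c ≠ c' ∧
      ∃ u v : V, cluster u = c ∧ cluster v = c' ∧ G.Adj u v)) :
    G.Connected ↔ CG.Connected := by
  have hsame : ∀ u v : V, cluster u = cluster v → G.Reachable u v := by
    intro u v h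
    by_cases huv : u = v
    · exact huv ▸ SimpleGraph.Reachable.refl u
    · exact (hintra u v h huv).reachable
  have hfwd : ∀ u v : V, G.Reachable u v → CG.Reachable (cluster u) (cluster v) := by
    intro u v hr
    obtain ⟨w⟩ := hr
    induction w with
    | nil => exact SimpleGraph.Reachable.refl _
    | cons h p ih =>
      rename_i a b c
      by_cases hc : cluster a = cluster b
      · exact hc ▸ ih
      · have : CG.Adj (cluster a) (cluster b) :=
          (hCG _ _).2 ⟨hc, a, b, rfl, rfl, h⟩
        exact this.reachable.trans ih
  have hbwd : ∀ c c' : ι, CG.Reachable c c' →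
      ∀ u v : V, cluster u = c → cluster v = c' → G.Reachable u v := by
    intro c c' hr
    obtain ⟨w⟩ := hr
    induction w with
    | nil =>
      intro u v hu hv
      exact hsame u v (hu.trans hv.symm)
    | cons h p ih =>
      intro u v hu hv
      obtain ⟨_, x, y, hx, hy, hxy⟩ := (hCG _ _).1 h
      exact ((hsame u x (hu.trans hx.symm)).trans hxy.reachable).trans (ih y v hy hv)
  constructor
  · intro hG
    haveI : Nonempty ι := Nonempty.map cluster inferInstance
    refine ⟨?_⟩
    intro c c'
    obtain ⟨u, rfl⟩ := hsurj c
    obtain ⟨v, rfl⟩ := hsurj c'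
    exact hfwd u v (hG.preconnected u v)
  · intro hCGc
    refine ⟨?_⟩
    intro u v
    exact hbwd _ _ (hCGc.preconnected (cluster u) (cluster v)) u v rfl rfl
end

section
/- Along the imitation dynamics ẋ_m^k given by equation (8), the function V(x) = −Σ_{m=1}^M ∫_{−∞}^{Σ_k z_k x_m^k} θ_m B_m g(s) ds is non-increasing: dV/dt ≤ 0, assuming Q satisfies (u−v)(Q(u−v) − Q(v−u)) ≥ 0 for all u, v. -/
/-!
Write `u_m = c_m g(Σ_k z_k x_m^k)`, so that `dV/dt = -Σ_m u_m Σ_k z_k ẋ_m^k`. Weighting cluster `k`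
by `z_k`, the imitation flow from strategy `i` to `m` becomes `A_{im} Q(u_m - u_i)` with the
interaction matrix `A = xᵀ W x`, where `W_{kk'} = z_k z_{k'} / Σ_{l ∈ C_k} z_l` on communicating
pairs. Symmetric neighbourhoods with equal normalizing sums make `W`, hence `A`, symmetric, so
`Σ_k z_k ẋ_m^k = Σ_i A_{mi} (Q(u_m - u_i) - Q(u_i - u_m))`. Pairing the terms `(m, i)` and `(i, m)`
gives `2 Σ_m u_m Σ_k z_k ẋ_m^k = Σ_{m,i} A_{mi} (u_m - u_i)(Q(u_m - u_i) - Q(u_i - u_m)) ≥ 0`.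
-/

open Finset Matrix

section Symmetrization

variable {M : Type*} [Fintype M]

theorem two_mul_sum_mul_sum_of_antisymm {R : Type*} [CommRing R] (f : M → M → R)
    (hf : ∀ m i, f i m = -f m i) (u : M → R) :
    2 * ∑ m, u m * ∑ i, f m i = ∑ m, ∑ i, (u m - u i) * f m i := by
  have hswap : ∑ m, u m * ∑ i, f m i = ∑ m, ∑ i, -(u i * f m i) := by
    simp only [mul_sum]
    rw [sum_comm]
    exact sum_congr rfl fun m _ => sum_congr rfl fun i _ => by rw [hf]; ring
  rw [two_mul]
  nth_rewrite 2 [hswap]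
  simp only [mul_sum, ← sum_add_distrib]
  exact sum_congr rfl fun m _ => sum_congr rfl fun i _ => by ring

theorem sum_mul_sum_imitation_nonneg (A : M → M → ℝ) (hA : ∀ m i, 0 ≤ A m i)
    (hAsymm : ∀ m i, A i m = A m i) (u : M → ℝ) (Q : ℝ → ℝ)
    (hQ : ∀ a b : ℝ, 0 ≤ (a - b) * (Q (a - b) - Q (b - a))) :
    0 ≤ ∑ m, u m * ∑ i, A m i * (Q (u m - u i) - Q (u i - u m)) := by
  have h := two_mul_sum_mul_sum_of_antisymm (fun m i => A m i * (Q (u m - u i) - Q (u i - u m)))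
    (fun m i => by rw [hAsymm]; ring) u
  have hsum : 0 ≤ ∑ m, ∑ i, (u m - u i) * (A m i * (Q (u m - u i) - Q (u i - u m))) :=
    sum_nonneg fun m _ => sum_nonneg fun i _ => by
      rw [mul_left_comm]; exact mul_nonneg (hA m i) (hQ _ _)
  linarith

end Symmetrization

section ImitationDynamics

variable {K M : Type*}

noncomputable def imitationField [Fintype M] (z : K → ℝ) (C : K → Finset K) (Q : ℝ → ℝ)
    (u : M → ℝ) (x : K → M → ℝ) (k : K) (m : M) : ℝ :=
  (∑ i, x k i * ∑ k' ∈ C k, (z k' / ∑ l ∈ C k, z l) * x k' m * Q (u m - u i)) -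
    x k m * ∑ i, ∑ k' ∈ C k, (z k' / ∑ l ∈ C k, z l) * x k' i * Q (u i - u m)

open scoped Classical in
noncomputable def contactWeight (z : K → ℝ) (C : K → Finset K) : Matrix K K ℝ :=
  of fun k k' => if k' ∈ C k then z k * z k' / ∑ l ∈ C k, z l else 0

theorem contactWeight_nonneg {z : K → ℝ} (hz : ∀ k, 0 ≤ z k) (C : K → Finset K) (k k' : K) :
    0 ≤ contactWeight z C k k' := by
  simp only [contactWeight, of_apply]
  split_ifs
  · exact div_nonneg (mul_nonneg (hz k) (hz k')) (sum_nonneg fun l _ => hz l)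
  · exact le_rfl

theorem contactWeight_isSymm (z : K → ℝ) {C : K → Finset K}
    (hsymm : ∀ k k', k' ∈ C k ↔ k ∈ C k')
    (hnorm : ∀ k k', k' ∈ C k → ∑ l ∈ C k, z l = ∑ l ∈ C k', z l) :
    (contactWeight z C).IsSymm := by
  refine IsSymm.ext fun k k' => ?_
  by_cases h : k' ∈ C k
  · simp only [contactWeight, of_apply, h, (hsymm k k').mp h, if_true, hnorm k k' h, mul_comm]
  · simp only [contactWeight, of_apply, h, mt (hsymm k k').mpr h, if_false]

theorem transpose_mul_contactWeight_mul_apply [Fintype K] (z : K → ℝ) (C : K → Finset K)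
    (x : Matrix K M ℝ) (m i : M) :
    (xᵀ * contactWeight z C * x) m i =
      ∑ k, z k * x k m * ∑ k' ∈ C k, (z k' / ∑ l ∈ C k, z l) * x k' i := by
  classical
  simp only [mul_apply, transpose_apply, contactWeight, of_apply, sum_mul, mul_sum]
  rw [sum_comm]
  refine sum_congr rfl fun k _ => ?_
  simp only [mul_ite, ite_mul, mul_zero, zero_mul]
  rw [sum_ite_mem, univ_inter]
  exact sum_congr rfl fun k' _ => by ring

theorem Matrix.IsSymm.transpose_mul_mul {α : Type*} [CommSemiring α] [Fintype K]
    {W : Matrix K K α} (hW : W.IsSymm) (x : Matrix K M α) : (xᵀ * W * x).IsSymm := by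
  simp only [IsSymm, transpose_mul, transpose_transpose, hW.eq, Matrix.mul_assoc]

theorem sum_mul_imitationField [Fintype K] [Fintype M] (z : K → ℝ) (C : K → Finset K)
    (Q : ℝ → ℝ) (u : M → ℝ) (x : Matrix K M ℝ) (m : M) :
    ∑ k, z k * imitationField z C Q u x k m =
      ∑ i, ((xᵀ * contactWeight z C * x) i m * Q (u m - u i) -
        (xᵀ * contactWeight z C * x) m i * Q (u i - u m)) := by
  simp only [transpose_mul_contactWeight_mul_apply, imitationField, mul_sub, sum_sub_distrib,
    mul_sum, sum_mul]
  congr 1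
  · rw [sum_comm]
    exact sum_congr rfl fun k _ => sum_congr rfl fun i _ => sum_congr rfl fun k' _ => by ring
  · rw [sum_comm]
    exact sum_congr rfl fun k _ => sum_congr rfl fun i _ => sum_congr rfl fun k' _ => by ring

theorem imitationField_potential_nonneg [Fintype K] [Fintype M] {z : K → ℝ} (hz : ∀ k, 0 ≤ z k)
    {C : K → Finset K} (hsymm : ∀ k k', k' ∈ C k ↔ k ∈ C k')
    (hnorm : ∀ k k', k' ∈ C k → ∑ l ∈ C k, z l = ∑ l ∈ C k', z l)
    {x : Matrix K M ℝ} (hx : ∀ k m, 0 ≤ x k m) (u : M → ℝ) {Q : ℝ → ℝ}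
    (hQ : ∀ a b : ℝ, 0 ≤ (a - b) * (Q (a - b) - Q (b - a))) :
    0 ≤ ∑ m, u m * ∑ k, z k * imitationField z C Q u x k m := by
  have hA := (contactWeight_isSymm z hsymm hnorm).transpose_mul_mul x
  simp only [sum_mul_imitationField, hA.apply, ← mul_sub]
  refine sum_mul_sum_imitation_nonneg (xᵀ * contactWeight z C * x) (fun m i => ?_)
    (fun m i => hA.apply m i) u Q hQ
  exact sum_nonneg fun k _ => mul_nonneg
    (sum_nonneg fun l _ => mul_nonneg (hx l m) (contactWeight_nonneg hz C l k)) (hx k i)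

end ImitationDynamics

theorem imitation_lyapunov_general {K M : Type*} [Fintype K] [Fintype M]
    (z : K → ℝ) (hz : ∀ k, 0 < z k)
    (C : K → Finset K)
    (hsymm : ∀ k k', k' ∈ C k ↔ k ∈ C k')
    (hnorm : ∀ k k', k' ∈ C k → ∑ l ∈ C k, z l = ∑ l ∈ C k', z l)
    (c : M → ℝ)
    (g : ℝ → ℝ)
    (F : M → ℝ → ℝ) (hF : ∀ m s, HasDerivAt (F m) (c m * g s) s)
    (Q : ℝ → ℝ)
    (hQ : ∀ u v : ℝ, 0 ≤ (u - v) * (Q (u - v) - Q (v - u)))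
    (x : ℝ → K → M → ℝ) (hxnonneg : ∀ t k m, 0 ≤ x t k m)
    (U : ℝ → M → ℝ) (hU : ∀ t m, U t m = c m * g (∑ k, z k * x t k m))
    (hdyn : ∀ t k m, HasDerivAt (fun t => x t k m)
      ((∑ i, x t k i * ∑ k' ∈ C k, (z k' / ∑ l ∈ C k, z l) * x t k' m
          * Q (U t m - U t i)) -
        x t k m * ∑ i, ∑ k' ∈ C k, (z k' / ∑ l ∈ C k, z l) * x t k' i
          * Q (U t i - U t m)) t) :
    ∀ t d : ℝ,
      HasDerivAt (fun t => -∑ m, F m (∑ k, z k * x t k m)) d t → d ≤ 0 := by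
  intro t d hd
  have hflow (m : M) : HasDerivAt (fun t => ∑ k, z k * x t k m)
      (∑ k, z k * imitationField z C Q (U t) (x t) k m) t :=
    HasDerivAt.fun_sum fun k _ => (hdyn t k m).const_mul (z k)
  have hV : HasDerivAt (fun t => -∑ m, F m (∑ k, z k * x t k m))
      (-∑ m, U t m * ∑ k, z k * imitationField z C Q (U t) (x t) k m) t := by
    simpa only [Function.comp_def, ← hU] using
      (HasDerivAt.fun_sum fun m _ => (hF m _).comp t (hflow m)).fun_neg
  rw [hd.unique hV, neg_nonpos]
  exact imitationField_potential_nonneg (fun k => (hz k).le) hsymm hnorm (hxnonneg t) (U t) hQ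

/-- Lyapunov property of the imitation dynamics (Theorem 2's key step): along a
trajectory `x(t)` of the imitation dynamics (8), with cluster sizes `z_k > 0`,
symmetric communication neighborhoods `C` with identical normalizing sums for
communicating clusters, nonnegative population states, positive `c_m = θ_m B_m`,
positive continuous grabbing function `g` with antiderivatives
`F_m' (s) = c_m g(s)`, and `Q` satisfying
`(u−v)(Q(u−v) − Q(v−u)) ≥ 0`, the function
`V(t) = −Σ_m F_m(Σ_k z_k x_m^k(t))` is non-increasing: any derivative of `V`
is `≤ 0`. -/
theorem imitation_lyapunov {K M : Type*} [Fintype K] [Fintype M]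
    (z : K → ℝ) (hz : ∀ k, 0 < z k)
    (C : K → Finset K) (hself : ∀ k, k ∈ C k)
    (hsymm : ∀ k k', k' ∈ C k ↔ k ∈ C k')
    (hnorm : ∀ k k', k' ∈ C k → ∑ l ∈ C k, z l = ∑ l ∈ C k', z l)
    (c : M → ℝ) (hc : ∀ m, 0 < c m)
    (g : ℝ → ℝ) (hgcont : Continuous g) (hgpos : ∀ s, 0 < g s)
    (F : M → ℝ → ℝ) (hF : ∀ m s, HasDerivAt (F m) (c m * g s) s)
    (Q : ℝ → ℝ) (hQrange : ∀ s, Q s ∈ Set.Icc (0 : ℝ) 1)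
    (hQ : ∀ u v : ℝ, 0 ≤ (u - v) * (Q (u - v) - Q (v - u)))
    (x : ℝ → K → M → ℝ) (hxnonneg : ∀ t k m, 0 ≤ x t k m)
    (U : ℝ → M → ℝ) (hU : ∀ t m, U t m = c m * g (∑ k, z k * x t k m))
    (hdyn : ∀ t k m, HasDerivAt (fun t => x t k m)
      ((∑ i, x t k i * ∑ k' ∈ C k, (z k' / ∑ l ∈ C k, z l) * x t k' m
          * Q (U t m - U t i)) -
        x t k m * ∑ i, ∑ k' ∈ C k, (z k' / ∑ l ∈ C k, z l) * x t k' i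
          * Q (U t i - U t m)) t) :
    ∀ t d : ℝ,
      HasDerivAt (fun t => -∑ m, F m (∑ k, z k * x t k m)) d t → d ≤ 0 :=
  imitation_lyapunov_general z hz C hsymm hnorm c g F hF Q hQ x hxnonneg U hU hdyn
end
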